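/- Fix a cache size k ≥ 1, a set P of k+1 pages, and a deterministic cache replacement policy A with cache size k whose cache is initialized to k pages of P. For every N there exists a page request sequence of length T ≥ N using only pages from P such that A faults on every single request of the sequence, while the furthest-in-the-future (Bélády) policy with cache size k, started from the same initial cache, faults at most ⌈T/k⌉ times on the same sequence. -/
import Mathlib


/-- The cache of a generic deterministic cache replacement policy with cache size `k` on
the request sequence `σ`, starting from the initial cache `C₀`, just before the request
at (0-based) time `t`.  On a fault with a full cache, the page
`evict hist C` is evicted, where `hist` is the list of requests seen so far (including
the current one); thus the eviction is a deterministic function of the requests seen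
so far. -/
def policyCache (k : ℕ) (evict : List ℕ → Finset ℕ → ℕ) (σ : ℕ → ℕ)
    (C₀ : Finset ℕ) : ℕ → Finset ℕ
  | 0 => C₀
  | t + 1 =>
    let C := policyCache k evict σ C₀ t
    let p := σ t
    if p ∈ C then C
    else if C.card < k then insert p C
    else insert p (C.erase (evict (List.ofFn fun i : Fin (t + 1) => σ i) C))

/-- The time (as an element of `ℕ∞`, so `⊤` if there is none) of the next request for
page `q` at or after time `t` in the request sequence `σ` of length `T`. -/
noncomputable def nextReq (σ : ℕ → ℕ) (T t q : ℕ) : ℕ∞ :=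
  sInf ((fun u : ℕ => (u : ℕ∞)) '' {u : ℕ | t ≤ u ∧ u < T ∧ σ u = q})

/-- The page evicted by the furthest-in-the-future (Bélády) policy on a fault at time `t`
with full cache `C`: a cached page whose next request (strictly after `t`) lies furthest
in the future; in particular a page that is never requested again is evicted
if one exists. -/
noncomputable def beladyEvict (σ : ℕ → ℕ) (T t : ℕ) (C : Finset ℕ) : ℕ := by
  classical
  exact if h : ∃ q ∈ C, ∀ r ∈ C, nextReq σ T (t + 1) r ≤ nextReq σ T (t + 1) q
    then h.choose else 0

/-- The cache of the furthest-in-the-future (Bélády) policy with cache size `k` on the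
request sequence `σ` of length `T`, starting from the initial cache `C₀`, just before the
request at (0-based) time `t`. -/
noncomputable def beladyCache (k : ℕ) (σ : ℕ → ℕ) (T : ℕ) (C₀ : Finset ℕ) :
    ℕ → Finset ℕ
  | 0 => C₀
  | t + 1 =>
    let C := beladyCache k σ T C₀ t
    let p := σ t
    if p ∈ C then C
    else if C.card < k then insert p C
    else insert p (C.erase (beladyEvict σ T t C))

/- auxiliary development -/

noncomputable def pickMissing (P C : Finset ℕ) : ℕ := by
  classical
  exact if h : (P \ C).Nonempty then (P \ C).min' h else 0

lemma pickMissing_mem {P C : Finset ℕ} (h : (P \ C).Nonempty) :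
    pickMissing P C ∈ P \ C := by
  unfold pickMissing
  rw [dif_pos h]
  exact (P \ C).min'_mem h

noncomputable def adv (k : ℕ) (evict : List ℕ → Finset ℕ → ℕ) (P C₀ : Finset ℕ) :
    ℕ → Finset ℕ × List ℕ
  | 0 => (C₀, [])
  | t + 1 =>
    let C := (adv k evict P C₀ t).1
    let h := (adv k evict P C₀ t).2
    let p := pickMissing P C
    (if p ∈ C then C else if C.card < k then insert p C
      else insert p (C.erase (evict (h ++ [p]) C)), h ++ [p])

noncomputable def advSeq (k : ℕ) (evict : List ℕ → Finset ℕ → ℕ) (P C₀ : Finset ℕ)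
    (t : ℕ) : ℕ := pickMissing P (adv k evict P C₀ t).1

lemma adv_snd_eq (k : ℕ) (evict : List ℕ → Finset ℕ → ℕ) (P C₀ : Finset ℕ) :
    ∀ t, (adv k evict P C₀ t).2 = List.ofFn fun i : Fin t => advSeq k evict P C₀ i
  | 0 => rfl
  | t + 1 => by
    rw [List.ofFn_succ', List.concat_eq_append]
    show (adv k evict P C₀ t).2 ++ [pickMissing P (adv k evict P C₀ t).1] = _
    rw [adv_snd_eq k evict P C₀ t]
    rfl

lemma adv_fst_eq (k : ℕ) (evict : List ℕ → Finset ℕ → ℕ) (P C₀ : Finset ℕ) :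
    ∀ t, (adv k evict P C₀ t).1
      = policyCache k evict (advSeq k evict P C₀) C₀ t
  | 0 => rfl
  | t + 1 => by
    have hs := adv_snd_eq k evict P C₀ t
    have hf := adv_fst_eq k evict P C₀ t
    show (if pickMissing P (adv k evict P C₀ t).1 ∈ (adv k evict P C₀ t).1 then _
      else if ((adv k evict P C₀ t).1).card < k then _
      else insert _ ((adv k evict P C₀ t).1.erase
        (evict ((adv k evict P C₀ t).2 ++ [pickMissing P (adv k evict P C₀ t).1])
          (adv k evict P C₀ t).1))) = _
    conv_rhs => rw [policyCache]
    rw [List.ofFn_succ' (fun i : Fin (t+1) => advSeq k evict P C₀ i), List.concat_eq_append]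
    simp only [advSeq, hs, hf, Fin.coe_castSucc, Fin.val_last]

lemma sdiff_ne {k : ℕ} {P C : Finset ℕ} (hP : P.card = k + 1) (h1 : C ⊆ P)
    (h2 : C.card = k) : (P \ C).Nonempty := by
  rw [← Finset.card_pos, Finset.card_sdiff_of_subset h1, hP, h2]
  omega

lemma adv_inv {k : ℕ} {evict : List ℕ → Finset ℕ → ℕ} {P C₀ : Finset ℕ}
    (hk : 1 ≤ k) (hP : P.card = k + 1)
    (hvalid : ∀ hist C, C.Nonempty → evict hist C ∈ C)
    (hC₀P : C₀ ⊆ P) (hC₀ : C₀.card = k) :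
    ∀ t, (adv k evict P C₀ t).1 ⊆ P ∧ (adv k evict P C₀ t).1.card = k
  | 0 => ⟨hC₀P, hC₀⟩
  | t + 1 => by
    obtain ⟨h1, h2⟩ := adv_inv hk hP hvalid hC₀P hC₀ t
    set C := (adv k evict P C₀ t).1 with hC
    have hne : (P \ C).Nonempty := sdiff_ne hP h1 h2
    have hp := pickMissing_mem hne
    rw [Finset.mem_sdiff] at hp
    have hCne : C.Nonempty := Finset.card_pos.mp (by omega)
    have he := hvalid ((adv k evict P C₀ t).2 ++ [pickMissing P C]) C hCne
    show (if pickMissing P C ∈ C then C else if C.card < k then insert (pickMissing P C) C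
      else insert (pickMissing P C) (C.erase
        (evict ((adv k evict P C₀ t).2 ++ [pickMissing P C]) C))) ⊆ P ∧
      (if pickMissing P C ∈ C then C else if C.card < k then insert (pickMissing P C) C
      else insert (pickMissing P C) (C.erase
        (evict ((adv k evict P C₀ t).2 ++ [pickMissing P C]) C))).card = k
    rw [if_neg hp.2, if_neg (by omega)]
    constructor
    · exact Finset.insert_subset hp.1 ((Finset.erase_subset _ _).trans h1)
    · rw [Finset.card_insert_of_notMem (fun hmem => hp.2 (Finset.mem_of_mem_erase hmem)),
        Finset.card_erase_of_mem he, h2]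
      omega

lemma advSeq_mem_P {k : ℕ} {evict : List ℕ → Finset ℕ → ℕ} {P C₀ : Finset ℕ}
    (hk : 1 ≤ k) (hP : P.card = k + 1)
    (hvalid : ∀ hist C, C.Nonempty → evict hist C ∈ C)
    (hC₀P : C₀ ⊆ P) (hC₀ : C₀.card = k) (t : ℕ) :
    advSeq k evict P C₀ t ∈ P ∧
      advSeq k evict P C₀ t ∉ policyCache k evict (advSeq k evict P C₀) C₀ t := by
  obtain ⟨h1, h2⟩ := adv_inv hk hP hvalid hC₀P hC₀ t
  have hp := pickMissing_mem (sdiff_ne hP h1 h2)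
  rw [Finset.mem_sdiff] at hp
  rw [← adv_fst_eq]
  exact hp

lemma nextReq_le {σ : ℕ → ℕ} {T t u q : ℕ} (hu : t ≤ u) (huT : u < T)
    (h : σ u = q) : nextReq σ T t q ≤ (u : ℕ∞) :=
  sInf_le ⟨u, ⟨hu, huT, h⟩, rfl⟩

lemma le_nextReq {σ : ℕ → ℕ} {T t q c : ℕ}
    (h : ∀ u, t ≤ u → u < T → σ u = q → c ≤ u) : (c : ℕ∞) ≤ nextReq σ T t q := by
  apply le_sInf
  rintro b ⟨u, ⟨h1, h2, h3⟩, rfl⟩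
  show (c : ℕ∞) ≤ (u : ℕ∞)
  exact_mod_cast h u h1 h2 h3

lemma beladyEvict_spec (σ : ℕ → ℕ) (T t : ℕ) {C : Finset ℕ} (hC : C.Nonempty) :
    beladyEvict σ T t C ∈ C ∧
      ∀ r ∈ C, nextReq σ T (t + 1) r ≤ nextReq σ T (t + 1) (beladyEvict σ T t C) := by
  have h : ∃ q ∈ C, ∀ r ∈ C, nextReq σ T (t + 1) r ≤ nextReq σ T (t + 1) q :=
    C.exists_max_image (nextReq σ T (t + 1)) hC
  unfold beladyEvict
  rw [dif_pos h]
  exact ⟨h.choose_spec.1, h.choose_spec.2⟩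

lemma belady_inv {k T : ℕ} {σ : ℕ → ℕ} {P C₀ : Finset ℕ}
    (hk : 1 ≤ k) (hP : P.card = k + 1) (hσ : ∀ t, σ t ∈ P)
    (hC₀P : C₀ ⊆ P) (hC₀ : C₀.card = k) :
    ∀ t, beladyCache k σ T C₀ t ⊆ P ∧ (beladyCache k σ T C₀ t).card = k
  | 0 => ⟨hC₀P, hC₀⟩
  | t + 1 => by
    obtain ⟨h1, h2⟩ := belady_inv (T := T) (σ := σ) hk hP hσ hC₀P hC₀ t
    set C := beladyCache k σ T C₀ t with hC
    have hCne : C.Nonempty := Finset.card_pos.mp (by omega)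
    have he := (beladyEvict_spec σ T t hCne).1
    show (if σ t ∈ C then C else if C.card < k then insert (σ t) C
      else insert (σ t) (C.erase (beladyEvict σ T t C))) ⊆ P ∧
      (if σ t ∈ C then C else if C.card < k then insert (σ t) C
      else insert (σ t) (C.erase (beladyEvict σ T t C))).card = k
    by_cases hmem : σ t ∈ C
    · rw [if_pos hmem]; exact ⟨h1, h2⟩
    · rw [if_neg hmem, if_neg (by omega : ¬C.card < k)]
      constructor
      · exact Finset.insert_subset (hσ t) ((Finset.erase_subset _ _).trans h1)
      · rw [Finset.card_insert_of_notMem (fun hm => hmem (Finset.mem_of_mem_erase hm)),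
          Finset.card_erase_of_mem he, h2]
        omega

lemma belady_gap {k T : ℕ} {σ : ℕ → ℕ} {P C₀ : Finset ℕ}
    (hk : 1 ≤ k) (hP : P.card = k + 1) (hσ : ∀ t, σ t ∈ P)
    (hC₀P : C₀ ⊆ P) (hC₀ : C₀.card = k)
    {t : ℕ} (htT : t < T) (hft : σ t ∉ beladyCache k σ T C₀ t) :
    ∀ u, t < u → u < T → σ u ∉ beladyCache k σ T C₀ u → t + k ≤ u := by
  obtain ⟨h1, h2⟩ := belady_inv (T := T) hk hP hσ hC₀P hC₀ t
  set C := beladyCache k σ T C₀ t with hCdef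
  have hCne : C.Nonempty := Finset.card_pos.mp (by omega)
  obtain ⟨hqC, hqmax⟩ := beladyEvict_spec σ T t hCne
  set q := beladyEvict σ T t C with hqdef
  have hCP : C = P.erase (σ t) := by
    apply Finset.eq_of_subset_of_card_le
    · intro x hx
      exact Finset.mem_erase.mpr ⟨fun hxe => hft (hxe ▸ hx), h1 hx⟩
    · rw [Finset.card_erase_of_mem (hσ t), hP, h2]; omega
  have hwin : ∃ r ∈ C, r ∉ (Finset.Ico (t + 1) (t + k)).image σ := by
    by_contra hcon
    push_neg at hcon
    have hc1 := Finset.card_le_card (fun x hx => hcon x hx)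
    have hc2 := Finset.card_image_le (s := Finset.Ico (t + 1) (t + k)) (f := σ)
    rw [Nat.card_Ico] at hc2
    omega
  obtain ⟨r, hrC, hr⟩ := hwin
  have hrge : ((t + k : ℕ) : ℕ∞) ≤ nextReq σ T (t + 1) r := by
    apply le_nextReq
    intro u hu huT hσu
    by_contra hlt
    push_neg at hlt
    exact hr (Finset.mem_image.mpr ⟨u, Finset.mem_Ico.mpr ⟨hu, hlt⟩, hσu⟩)
  have hqge : ((t + k : ℕ) : ℕ∞) ≤ nextReq σ T (t + 1) q := hrge.trans (hqmax r hrC)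
  have hkey : ∀ u, t + 1 ≤ u → u < T → u < t + k → σ u ≠ q := by
    intro u hu huT hutk hequ
    have h3 := nextReq_le hu huT hequ
    have h4 := hqge.trans h3
    have h5 : (t + k : ℕ) ≤ u := by exact_mod_cast h4
    omega
  have hq_ne : q ≠ σ t := fun h => hft (h ▸ hqC)
  have hstep : beladyCache k σ T C₀ (t + 1) = P.erase q := by
    show (if σ t ∈ C then C else if C.card < k then insert (σ t) C
      else insert (σ t) (C.erase q)) = P.erase q
    rw [if_neg hft, if_neg (by omega : ¬C.card < k), hCP, Finset.erase_right_comm,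
      Finset.insert_erase (Finset.mem_erase.mpr ⟨hq_ne.symm, hσ t⟩)]
  have hpersist : ∀ d, t + 1 + d ≤ T → t + 1 + d ≤ t + k →
      beladyCache k σ T C₀ (t + 1 + d) = P.erase q := by
    intro d
    induction d with
    | zero => intro _ _; exact hstep
    | succ d ih =>
      intro hT2 hk2
      have hcd := ih (by omega) (by omega)
      have hre : t + 1 + (d + 1) = (t + 1 + d) + 1 := by omega
      rw [hre]
      have hmem : σ (t + 1 + d) ∈ beladyCache k σ T C₀ (t + 1 + d) := by
        rw [hcd]
        exact Finset.mem_erase.mpr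
          ⟨hkey (t + 1 + d) (by omega) (by omega) (by omega), hσ _⟩
      show (if σ (t + 1 + d) ∈ beladyCache k σ T C₀ (t + 1 + d)
        then beladyCache k σ T C₀ (t + 1 + d)
        else if (beladyCache k σ T C₀ (t + 1 + d)).card < k
        then insert (σ (t + 1 + d)) (beladyCache k σ T C₀ (t + 1 + d))
        else insert (σ (t + 1 + d)) ((beladyCache k σ T C₀ (t + 1 + d)).erase
          (beladyEvict σ T (t + 1 + d) (beladyCache k σ T C₀ (t + 1 + d))))) = P.erase q
      rw [if_pos hmem, hcd]
  intro u htu huT hfu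
  by_contra hlt
  push_neg at hlt
  have hcu : beladyCache k σ T C₀ u = P.erase q := by
    have hre : u = t + 1 + (u - t - 1) := by omega
    rw [hre]
    exact hpersist _ (by omega) (by omega)
  rw [hcu] at hfu
  have hσuq : σ u = q := by
    by_contra hne
    exact hfu (Finset.mem_erase.mpr ⟨hne, hσ u⟩)
  exact hkey u (by omega) huT (by omega) hσuq

lemma count_gap {k T : ℕ} (hk : 1 ≤ k) (S : Set ℕ) (hS : ∀ t ∈ S, t < T)
    (hgap : ∀ s ∈ S, ∀ t ∈ S, s < t → s + k ≤ t) : S.ncard ≤ (T + k - 1) / k := by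
  rcases S.eq_empty_or_nonempty with h | h
  · simp [h]
  obtain ⟨t0, ht0⟩ := h
  have hT1 : 1 ≤ T := by have := hS t0 ht0; omega
  have hinj : Set.InjOn (· / k) S := by
    intro a ha b hb hab
    by_contra hne
    rcases lt_or_gt_of_ne hne with hlt | hlt
    · have hg := hgap a ha b hb hlt
      have h1 : (a + k) / k ≤ b / k := Nat.div_le_div_right hg
      rw [Nat.add_div_right _ (by omega)] at h1
      simp only at hab
      omega
    · have hg := hgap b hb a ha hlt
      have h1 : (b + k) / k ≤ a / k := Nat.div_le_div_right hg
      rw [Nat.add_div_right _ (by omega)] at h1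
      simp only at hab
      omega
  have himg : (· / k) '' S ⊆ ↑(Finset.range ((T + k - 1) / k)) := by
    rintro x ⟨a, ha, rfl⟩
    simp only [Finset.coe_range, Set.mem_Iio]
    have haT : a < T := hS a ha
    have h1 : a / k ≤ (T - 1) / k := Nat.div_le_div_right (by omega)
    have h2 : (T + k - 1) / k = (T - 1) / k + 1 := by
      rw [show T + k - 1 = (T - 1) + k by omega, Nat.add_div_right _ (by omega)]
    rw [h2]
    exact Nat.lt_succ_of_le h1
  calc S.ncard = ((· / k) '' S).ncard := (Set.ncard_image_of_injOn hinj).symm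
    _ ≤ (↑(Finset.range ((T + k - 1) / k)) : Set ℕ).ncard :=
        Set.ncard_le_ncard himg (Finset.range _).finite_toSet
    _ = (T + k - 1) / k := by rw [Set.ncard_coe_finset, Finset.card_range]

/-- **Exercise 1.1**: fix `k ≥ 1`, a set `P` of `k + 1` pages, and a deterministic cache
replacement policy with cache size `k` whose cache is initialized to `k` pages of `P`.
For every `N` there is a request sequence of length `T ≥ N` using only pages of `P` on
which the policy faults on every single request, while the Bélády policy, started from
the same initial cache, faults at most `⌈T/k⌉ = (T + k - 1)/k` times. -/
theorem stmt8 (k : ℕ) (hk : 1 ≤ k) (P : Finset ℕ) (hP : P.card = k + 1)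
    (evict : List ℕ → Finset ℕ → ℕ)
    (hvalid : ∀ hist C, C.Nonempty → evict hist C ∈ C)
    (C₀ : Finset ℕ) (hC₀P : C₀ ⊆ P) (hC₀ : C₀.card = k) (N : ℕ) :
    ∃ (T : ℕ) (σ : ℕ → ℕ), N ≤ T ∧ (∀ t < T, σ t ∈ P) ∧
      (∀ t < T, σ t ∉ policyCache k evict σ C₀ t) ∧
      {t | t < T ∧ σ t ∉ beladyCache k σ T C₀ t}.ncard ≤ (T + k - 1) / k := by
  refine ⟨N, advSeq k evict P C₀, le_refl N, fun t _ =>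
    (advSeq_mem_P hk hP hvalid hC₀P hC₀ t).1, fun t _ =>
    (advSeq_mem_P hk hP hvalid hC₀P hC₀ t).2, ?_⟩
  apply count_gap hk
  · intro t ht; exact ht.1
  · intro s hs t ht hst
    exact belady_gap hk hP (fun u => (advSeq_mem_P hk hP hvalid hC₀P hC₀ u).1)
      hC₀P hC₀ hs.1 hs.2 t hst ht.1 ht.2
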